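/- Let T be a linear operator on F_q^n and λ=(λ_1,…,λ_ℓ) a partition of n. Then |H(k_λ,T)| = [λ]_q! · fl_λ(T), where fl_λ(T) is the number of λ-flags of T-invariant subspaces and k_λ is the complete-type Hessenberg function associated to λ. -/

import Mathlib

/-- The q-analog `[m]_q = 1 + q + ⋯ + q^(m-1)`. -/
def qInt (q m : ℕ) : ℕ := ∑ j ∈ Finset.range m, q ^ j

/-- The q-factorial `[k]_q! = ∏_{j=1}^k [j]_q`. -/
def qFact (q k : ℕ) : ℕ := ∏ j ∈ Finset.range k, qInt q (j + 1)

/-- A complete flag `0 = V 0 ⊆ V 1 ⊆ ⋯ ⊆ V n = F^n` with `dim (V i) = i`. -/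
def IsFlag (F : Type) [Field F] (n : ℕ) (V : ℕ → Submodule F (Fin n → F)) : Prop :=
  V 0 = ⊥ ∧ V n = ⊤ ∧ (∀ i, V i ≤ V (i + 1)) ∧ ∀ i, i ≤ n → Module.finrank F ↥(V i) = i

/-- A Hessenberg function on `[n]` (with values queried at `1,…,n`). -/
def IsHess (n : ℕ) (m : ℕ → ℕ) : Prop :=
  (∀ i, 1 ≤ i → i ≤ n → i ≤ m i ∧ m i ≤ n) ∧
  ∀ i j, 1 ≤ i → i ≤ j → j ≤ n → m i ≤ m j

/-- The set of `F_q`-points of the Hessenberg variety `H(m, T)`. -/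
def Hess (F : Type) [Field F] (n : ℕ) (m : ℕ → ℕ) (T : Module.End F (Fin n → F)) :
    Set (ℕ → Submodule F (Fin n → F)) :=
  {V | IsFlag F n V ∧ ∀ i, 1 ≤ i → i ≤ n → (V i).map T ≤ V (m i)}

/-- Partial sums `α t = λ 1 + ⋯ + λ t` of a sequence `λ : Fin ℓ → ℕ`. -/
def psum (ℓ : ℕ) (lam : Fin ℓ → ℕ) (t : ℕ) : ℕ :=
  ∑ j ∈ Finset.range t, if h : j < ℓ then lam ⟨j, h⟩ else 0

/-- The complete-type Hessenberg function `k_λ`, taking the value `α i` on each `j`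
with `α (i-1) < j ≤ α i`. -/
noncomputable def kLam (ℓ : ℕ) (lam : Fin ℓ → ℕ) : ℕ → ℕ :=
  fun j => psum ℓ lam (sInf {t | j ≤ psum ℓ lam t})

/-- A `λ`-flag of `T`-invariant subspaces:
`0 = W 0 ⊆ W 1 ⊆ ⋯ ⊆ W ℓ = F^n` with `dim (W i) = λ 1 + ⋯ + λ i`
(equivalently `dim (W i / W (i-1)) = λ i`) and `T (W i) ⊆ W i`. -/
def IsInvLamFlag (F : Type) [Field F] (n : ℕ) (ℓ : ℕ) (lam : Fin ℓ → ℕ)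
    (T : Module.End F (Fin n → F)) (W : Fin (ℓ + 1) → Submodule F (Fin n → F)) : Prop :=
  W 0 = ⊥ ∧ W (Fin.last ℓ) = ⊤ ∧ Monotone W ∧
  (∀ i : Fin (ℓ + 1), Module.finrank F ↥(W i) = psum ℓ lam i) ∧
  ∀ i, (W i).map T ≤ W i

/-!
A flag `V` lies in `H(k_λ, T)` exactly when its members `V (α t)` at the partial sums
`α t = λ 1 + ⋯ + λ t` are `T`-invariant: `k_λ j ≥ j` is always one of the `α t`, and
`k_λ (α t) = α t`. Hence `V ↦ (V (α t))ₜ` maps `H(k_λ, T)` onto the `λ`-flags of invariant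
subspaces, and its fibre over `W` consists of the complete flags through `W`: an independent
choice, in each block, of a complete chain from `W (t - 1)` to `W t`. Complete chains from `A`
to `B` with `dim B - dim A = m` number `[m]_q!` by induction on `m`, because every first step
`A ⊔ K ∙ v` arises from exactly `q ^ (dim A + 1) - q ^ dim A` vectors `v`, so there are `[m]_q`
first steps.
-/

open Module Finset

theorem Nat.card_eq_card_mul_of_card_fiber {α β : Type*} [Finite β] (f : α → β) {k : ℕ}
    (hk : k ≠ 0) (h : ∀ b, Nat.card {a // f a = b} = k) : Nat.card α = Nat.card β * k := by
  have := Fintype.ofFinite β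
  have (b : β) : Finite {a // f a = b} := Nat.finite_of_card_ne_zero (h b ▸ hk)
  rw [← Nat.card_congr (Equiv.sigmaFiberEquiv f), Nat.card_sigma]
  simp [h, Nat.card_eq_fintype_card]

instance Submodule.finite_of_finite {K M : Type*} [Semiring K] [AddCommMonoid M] [Module K M]
    [Finite M] : Finite (Submodule K M) :=
  Finite.of_injective _ SetLike.coe_injective

theorem qFact_ne_zero (q m : ℕ) : qFact q m ≠ 0 :=
  prod_ne_zero_iff.2 fun j _ =>
    (Nat.one_le_iff_ne_zero.1 (single_le_sum (fun _ _ => Nat.zero_le _)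
      (mem_range.2 j.succ_pos) : q ^ 0 ≤ qInt q (j + 1)))

theorem eq_qInt_of_mul_pow_sub_add {q r d N : ℕ} (hq : 1 < q)
    (h : N * (q ^ (r + 1) - q ^ r) + q ^ r = q ^ (r + d)) : N = qInt q d := by
  have hpow : q ^ r ≤ q ^ (r + 1) := Nat.pow_le_pow_right (by omega) r.le_succ
  zify [hpow] at h
  have hzero : ((N : ℤ) - qInt q d) * (q ^ r * (q - 1)) = 0 := by
    push_cast [qInt]
    linear_combination h - (q : ℤ) ^ r * geom_sum_mul (q : ℤ) d
  have hne : (q : ℤ) ^ r * (q - 1) ≠ 0 := by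
    have : (1 : ℤ) < q := by exact_mod_cast hq
    positivity
  exact_mod_cast sub_eq_zero.1 ((mul_eq_zero.1 hzero).resolve_right hne)

section CompleteChain

variable {K M : Type*} [Field K] [AddCommGroup M] [Module K M]

/-- `A = c 0 < c 1 < ⋯ < c m = B` with one-dimensional steps, continued by `c i = B` for
`i ≥ m`, so that a chain is a function on `ℕ`. -/
def IsCompleteChain (A B : Submodule K M) (m : ℕ) (c : ℕ → Submodule K M) : Prop :=
  c 0 = A ∧ Monotone c ∧ (∀ i ≤ m, finrank K (c i) = finrank K A + i) ∧ ∀ i, m ≤ i → c i = B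

namespace IsCompleteChain

variable {A B C : Submodule K M} {m k : ℕ} {c d : ℕ → Submodule K M}

theorem eq_right (hc : IsCompleteChain A B m c) : c m = B := hc.2.2.2 m le_rfl

theorem finrank_right (hc : IsCompleteChain A B m c) : finrank K B = finrank K A + m :=
  hc.eq_right ▸ hc.2.2.1 m le_rfl

theorem le_apply (hc : IsCompleteChain A B m c) (i : ℕ) : A ≤ c i :=
  hc.1 ▸ hc.2.1 (Nat.zero_le i)

theorem apply_le (hc : IsCompleteChain A B m c) (i : ℕ) : c i ≤ B :=
  hc.2.2.2 (max i m) (le_max_right i m) ▸ hc.2.1 (le_max_left i m)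

theorem truncate (hc : IsCompleteChain A B (m + k) c) (hC : c m = C) :
    IsCompleteChain A C m (fun j => c (min j m)) :=
  ⟨by simpa using hc.1, fun _ _ hij => hc.2.1 (min_le_min_right m hij),
    fun i hi => by
      rw [show (fun j => c (min j m)) i = c i from congrArg c (min_eq_left hi)]
      exact hc.2.2.1 i (by omega),
    fun i hi => (congrArg c (min_eq_right hi)).trans hC⟩

theorem shift (hc : IsCompleteChain A B (m + k) c) (hC : c m = C) :
    IsCompleteChain C B k (fun j => c (m + j)) := by
  have hCrank := hC ▸ hc.2.2.1 m (by omega)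
  refine ⟨hC, fun _ _ hij => hc.2.1 (by omega), fun i hi => ?_, fun i hi => hc.2.2.2 _ (by omega)⟩
  rw [hc.2.2.1 _ (by omega), hCrank, add_assoc]

theorem append (hc : IsCompleteChain A C m c) (hd : IsCompleteChain C B k d) :
    IsCompleteChain A B (m + k) (fun j => if j ≤ m then c j else d (j - m)) := by
  have hCd : C = d 0 := hd.1.symm
  have hCrank := hc.finrank_right
  refine ⟨by simpa using hc.1, fun i j hij => ?_, fun i hi => ?_, fun i hi => ?_⟩
  · dsimp only
    split_ifs with hi hj hj
    · exact hc.2.1 hij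
    · exact (hc.2.1 hi).trans (hc.eq_right.trans hCd ▸ hd.2.1 (Nat.zero_le _))
    · omega
    · exact hd.2.1 (by omega)
  · by_cases him : i ≤ m
    · rw [show (fun j => if j ≤ m then c j else d (j - m)) i = c i from if_pos him]
      exact hc.2.2.1 i him
    · rw [show (fun j => if j ≤ m then c j else d (j - m)) i = d (i - m) from if_neg him,
        hd.2.2.1 _ (by omega), hCrank]
      omega
  · dsimp only
    split_ifs with him
    · rw [show i = m by omega, hc.eq_right, hCd, hd.2.2.2 0 (by omega)]
    · exact hd.2.2.2 _ (by omega)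

end IsCompleteChain

def completeChainSplitEquiv (A C B : Submodule K M) (m k : ℕ) :
    {c // IsCompleteChain A B (m + k) c ∧ c m = C} ≃
      {c // IsCompleteChain A C m c} × {c // IsCompleteChain C B k c} where
  toFun c := (⟨_, c.2.1.truncate c.2.2⟩, ⟨_, c.2.1.shift c.2.2⟩)
  invFun p := ⟨_, p.1.2.append p.2.2, by simpa using p.1.2.eq_right⟩
  left_inv c := by
    ext1
    funext j
    dsimp only
    split_ifs with hj
    · rw [min_eq_left hj]
    · rw [Nat.add_sub_cancel' (by omega)]
  right_inv p := by
    obtain ⟨⟨c, hc⟩, ⟨d, hd⟩⟩ := p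
    ext j : 3
    · dsimp only
      rw [if_pos (min_le_right _ _)]
      rcases le_total j m with hj | hj
      · rw [min_eq_left hj]
      · rw [min_eq_right hj, hc.2.2.2 j hj, hc.eq_right]
    · dsimp only
      split_ifs with hj
      · rw [show j = 0 by omega, Nat.add_zero, hc.eq_right, hd.1]
      · rw [Nat.add_sub_cancel_left]

variable [FiniteDimensional K M]

theorem card_isCompleteChain_of_le_one {A B : Submodule K M} {m : ℕ} (hm : m ≤ 1)
    (hAB : A ≤ B) (h : finrank K B = finrank K A + m) :
    Nat.card {c // IsCompleteChain A B m c} = 1 := by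
  have hchain : IsCompleteChain A B m (fun i => if i = 0 then A else B) := by
    refine ⟨rfl, fun i j hij => ?_, fun i hi => ?_, fun i hi => ?_⟩
    · dsimp only
      split_ifs <;> first | exact le_rfl | exact hAB | omega
    · rcases Nat.eq_zero_or_pos i with rfl | hi0
      · simp
      · rw [show (fun i => if i = 0 then A else B) i = B from if_neg hi0.ne', h]
        omega
    · dsimp only
      split_ifs with hi0
      · exact Submodule.eq_of_le_of_finrank_eq hAB (by omega)
      · rfl
  have hunique (c : ℕ → Submodule K M) (hc : IsCompleteChain A B m c) :
      c = fun i => if i = 0 then A else B := by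
    funext i
    split_ifs with hi0
    · rw [hi0, hc.1]
    · exact hc.2.2.2 i (by omega)
  rw [Nat.card_eq_one_iff_unique]
  exact ⟨⟨fun c d => Subtype.ext ((hunique c c.2).trans (hunique d d.2).symm)⟩, ⟨⟨_, hchain⟩⟩⟩

theorem sup_span_singleton_eq_iff {A A' : Submodule K M} {v : M} (hv : v ∉ A) (hAA' : A ≤ A')
    (h : finrank K A' = finrank K A + 1) : A ⊔ K ∙ v = A' ↔ v ∈ A' :=
  ⟨fun hv' => hv' ▸ Submodule.mem_sup_right (Submodule.mem_span_singleton_self v),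
    fun hvA' => Submodule.eq_of_le_of_finrank_eq
      (sup_le hAA' ((Submodule.span_singleton_le_iff_mem _ _).2 hvA'))
      (by rw [Submodule.finrank_sup_span_singleton hv, h])⟩

variable [Finite K]

theorem card_mem_and_notMem_add_pow_finrank {A B : Submodule K M} (hAB : A ≤ B) :
    Nat.card {v // v ∈ B ∧ v ∉ A} + Nat.card K ^ finrank K A = Nat.card K ^ finrank K B := by
  have := Module.finite_of_finite K (M := M)
  rw [← Module.natCard_eq_pow_finrank, ← Module.natCard_eq_pow_finrank]
  exact Set.ncard_sdiff_add_ncard_of_subset (s := (A : Set M)) (t := B) hAB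

theorem card_finrank_add_one_between {A B : Submodule K M} {d : ℕ} (hAB : A ≤ B)
    (h : finrank K B = finrank K A + d) :
    Nat.card {A' : Submodule K M // A ≤ A' ∧ A' ≤ B ∧ finrank K A' = finrank K A + 1} =
      qInt (Nat.card K) d := by
  have := Module.finite_of_finite K (M := M)
  have hq : 1 < Nat.card K := Finite.one_lt_card
  have hpow : Nat.card K ^ finrank K A < Nat.card K ^ (finrank K A + 1) :=
    Nat.pow_lt_pow_right hq (Nat.lt_succ_self _)
  let join (v : {v // v ∈ B ∧ v ∉ A}) :
      {A' : Submodule K M // A ≤ A' ∧ A' ≤ B ∧ finrank K A' = finrank K A + 1} :=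
    ⟨A ⊔ K ∙ v.1, le_sup_left, sup_le hAB ((Submodule.span_singleton_le_iff_mem _ _).2 v.2.1),
      Submodule.finrank_sup_span_singleton v.2.2⟩
  have hfiber (A') : Nat.card {v // join v = A'} =
      Nat.card K ^ (finrank K A + 1) - Nat.card K ^ finrank K A := by
    let e : {v // join v = A'} ≃ {w // w ∈ A'.1 ∧ w ∉ A} :=
      { toFun v := ⟨v.1.1, (sup_span_singleton_eq_iff v.1.2.2 A'.2.1 A'.2.2.2).1
            (congrArg Subtype.val v.2), v.1.2.2⟩
        invFun w := ⟨⟨w.1, A'.2.2.1 w.2.1, w.2.2⟩,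
          Subtype.ext ((sup_span_singleton_eq_iff w.2.2 A'.2.1 A'.2.2.2).2 w.2.1)⟩
        left_inv _ := rfl
        right_inv _ := rfl }
    have hA' := card_mem_and_notMem_add_pow_finrank A'.2.1
    rw [A'.2.2.2] at hA'
    rw [Nat.card_congr e]
    omega
  have hcount := card_mem_and_notMem_add_pow_finrank hAB
  rw [Nat.card_eq_card_mul_of_card_fiber join (by omega) hfiber, h] at hcount
  exact eq_qInt_of_mul_pow_sub_add hq hcount

theorem card_isCompleteChain {A B : Submodule K M} {m : ℕ} (hAB : A ≤ B)
    (h : finrank K B = finrank K A + m) :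
    Nat.card {c // IsCompleteChain A B m c} = qFact (Nat.card K) m := by
  have := Module.finite_of_finite K (M := M)
  induction m generalizing A with
  | zero => exact card_isCompleteChain_of_le_one zero_le_one hAB h
  | succ m ih =>
    rw [Nat.add_comm m 1] at h ⊢
    let firstStep (c : {c // IsCompleteChain A B (1 + m) c}) :
        {A' : Submodule K M // A ≤ A' ∧ A' ≤ B ∧ finrank K A' = finrank K A + 1} :=
      ⟨c.1 1, c.2.le_apply 1, c.2.apply_le 1, c.2.2.2.1 1 (by omega)⟩
    have hfiber (A') : Nat.card {c // firstStep c = A'} = qFact (Nat.card K) m := by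
      let e : {c // firstStep c = A'} ≃ {c // IsCompleteChain A B (1 + m) c ∧ c 1 = A'.1} :=
        (Equiv.subtypeEquivRight fun _ => Subtype.ext_iff).trans
          (Equiv.subtypeSubtypeEquivSubtypeInter _ fun c : ℕ → Submodule K M => c 1 = A'.1)
      rw [Nat.card_congr (e.trans (completeChainSplitEquiv A A'.1 B 1 m)), Nat.card_prod,
        card_isCompleteChain_of_le_one le_rfl A'.2.1 A'.2.2.2,
        ih A'.2.2.1 (by rw [h, A'.2.2.2]; ring), one_mul]
    rw [Nat.card_eq_card_mul_of_card_fiber firstStep (qFact_ne_zero _ _) hfiber,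
      card_finrank_add_one_between hAB h, Nat.add_comm 1 m, qFact, qFact, prod_range_succ,
      mul_comm]

theorem card_isCompleteChain_through {a : ℕ → ℕ} {W : ℕ → Submodule K M} (ha0 : a 0 = 0)
    (ha : Monotone a) (hW : Monotone W) (hWa : ∀ t, finrank K (W t) = finrank K (W 0) + a t)
    (s : ℕ) :
    Nat.card {c // IsCompleteChain (W 0) (W s) (a s) c ∧ ∀ t ≤ s, c (a t) = W t} =
      ∏ t ∈ range s, qFact (Nat.card K) (a (t + 1) - a t) := by
  induction s with
  | zero =>
    rw [prod_range_zero,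
      ← card_isCompleteChain_of_le_one (by rw [ha0]; exact zero_le_one) le_rfl (hWa 0)]
    refine Nat.card_congr (Equiv.subtypeEquivRight fun c => ⟨fun hc => hc.1, fun hc => ⟨hc, ?_⟩⟩)
    intro t ht
    rw [Nat.le_zero.1 ht]
    exact hc.eq_right
  | succ s ih =>
    obtain ⟨d, hd⟩ := Nat.exists_eq_add_of_le (ha (Nat.le_add_right s 1))
    have hsplit (c : ℕ → Submodule K M) :
        (IsCompleteChain (W 0) (W (s + 1)) (a (s + 1)) c ∧ ∀ t ≤ s + 1, c (a t) = W t) ↔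
          (IsCompleteChain (W 0) (W (s + 1)) (a s + d) c ∧ c (a s) = W s) ∧
            ∀ t ≤ s, c (a t) = W t := by
      rw [hd]
      refine ⟨fun ⟨hc, hthrough⟩ =>
          ⟨⟨hc, hthrough s s.le_succ⟩, fun t ht => hthrough t (by omega)⟩,
        fun ⟨⟨hc, _⟩, hthrough⟩ => ⟨hc, fun t ht => ?_⟩⟩
      rcases Nat.le_succ_iff.1 ht with ht | rfl
      · exact hthrough t ht
      · rw [hd]
        exact hc.eq_right
    have hprefix (c : {c // IsCompleteChain (W 0) (W (s + 1)) (a s + d) c ∧ c (a s) = W s}) :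
        (∀ t ≤ s, c.1 (a t) = W t) ↔
          ∀ t ≤ s, (completeChainSplitEquiv _ _ _ _ _ c).1.1 (a t) = W t :=
      forall₂_congr fun t ht => by
        rw [show (completeChainSplitEquiv _ _ _ _ _ c).1.1 (a t) = c.1 (min (a t) (a s)) from rfl,
          min_eq_left (ha ht)]
    let e := (Equiv.subtypeEquivRight hsplit).trans <|
      (Equiv.subtypeSubtypeEquivSubtypeInter _ _).symm.trans <|
      (Equiv.subtypeEquiv (q := fun p => ∀ t ≤ s, p.1.1 (a t) = W t)
        (completeChainSplitEquiv _ _ _ _ _) hprefix).trans <|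
      Equiv.prodSubtypeFstEquivSubtypeProd.trans <|
      Equiv.prodCongr (Equiv.subtypeSubtypeEquivSubtypeInter (IsCompleteChain (W 0) (W s) (a s))
        fun c => ∀ t ≤ s, c (a t) = W t) (Equiv.refl _)
    rw [Nat.card_congr e, Nat.card_prod, ih,
      card_isCompleteChain (hW s.le_succ) (by rw [hWa (s + 1), hWa s, hd, add_assoc]),
      prod_range_succ, hd, Nat.add_sub_cancel_left]

end CompleteChain

section PartialSums

variable {ℓ : ℕ} (lam : Fin ℓ → ℕ)

theorem psum_zero : psum ℓ lam 0 = 0 := sum_range_zero _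

theorem psum_succ (i : Fin ℓ) : psum ℓ lam (i + 1) = psum ℓ lam i + lam i := by
  rw [psum, sum_range_succ, dif_pos i.2]
  rfl

theorem psum_mono : Monotone (psum ℓ lam) :=
  monotone_nat_of_le_succ fun t => by
    rw [psum, psum, sum_range_succ]
    exact Nat.le_add_right _ _

theorem psum_self : psum ℓ lam ℓ = ∑ i, lam i := by
  rw [psum, ← Fin.sum_univ_eq_sum_range]
  exact sum_congr rfl fun i _ => dif_pos i.2

theorem psum_min (t : ℕ) : psum ℓ lam (min t ℓ) = psum ℓ lam t := by
  rcases le_total t ℓ with h | h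
  · rw [min_eq_left h]
  · rw [min_eq_right h, psum, psum]
    exact sum_subset (range_subset_range.2 h) fun j _ hj => dif_neg (by simpa using hj)

theorem prod_range_psum_sub (f : ℕ → ℕ) :
    ∏ t ∈ range ℓ, f (psum ℓ lam (t + 1) - psum ℓ lam t) = ∏ i, f (lam i) := by
  rw [← Fin.prod_univ_eq_prod_range]
  exact prod_congr rfl fun i _ => by rw [psum_succ, Nat.add_sub_cancel_left]

theorem le_kLam {j : ℕ} (hj : j ≤ psum ℓ lam ℓ) : j ≤ kLam ℓ lam j :=
  Nat.sInf_mem (⟨ℓ, hj⟩ : {t | j ≤ psum ℓ lam t}.Nonempty)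

theorem exists_kLam_eq_psum {j : ℕ} (hj : j ≤ psum ℓ lam ℓ) :
    ∃ t ≤ ℓ, kLam ℓ lam j = psum ℓ lam t :=
  ⟨_, Nat.sInf_le hj, rfl⟩

theorem kLam_psum (t : ℕ) : kLam ℓ lam (psum ℓ lam t) = psum ℓ lam t :=
  le_antisymm (psum_mono lam (Nat.sInf_le (le_refl (psum ℓ lam t))))
    (Nat.sInf_mem (⟨t, le_refl (psum ℓ lam t)⟩ : {t' | psum ℓ lam t ≤ psum ℓ lam t'}.Nonempty))

end PartialSums

section Hessenberg

variable {F : Type} [Field F] {n ℓ : ℕ} {lam : Fin ℓ → ℕ} {T : Module.End F (Fin n → F)}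
  {V : ℕ → Submodule F (Fin n → F)}

theorem isFlag_iff_isCompleteChain : IsFlag F n V ↔ IsCompleteChain ⊥ ⊤ n V := by
  refine ⟨fun ⟨h0, htop, hstep, hrank⟩ => ⟨h0, monotone_nat_of_le_succ hstep, fun i hi => ?_,
      fun i hi => top_unique (htop ▸ monotone_nat_of_le_succ hstep hi)⟩,
    fun hV => ⟨hV.1, hV.eq_right, fun i => hV.2.1 i.le_succ, fun i hi => ?_⟩⟩
  · rw [hrank i hi, finrank_bot, zero_add]
  · rw [hV.2.2.1 i hi, finrank_bot, zero_add]

theorem mem_hess_kLam_iff (hsum : ∑ i, lam i = n) :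
    V ∈ Hess F n (kLam ℓ lam) T ↔
      IsFlag F n V ∧ ∀ t ≤ ℓ, (V (psum ℓ lam t)).map T ≤ V (psum ℓ lam t) := by
  have hn : psum ℓ lam ℓ = n := (psum_self lam).trans hsum
  refine ⟨fun ⟨hV, hT⟩ => ⟨hV, fun t ht => ?_⟩, fun ⟨hV, hinv⟩ => ⟨hV, fun j _ hj => ?_⟩⟩
  · rcases Nat.eq_zero_or_pos (psum ℓ lam t) with h0 | hpos
    · rw [h0, hV.1, Submodule.map_bot]
    · simpa only [kLam_psum] using hT _ hpos (hn ▸ psum_mono lam ht)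
  · obtain ⟨t, ht, hkt⟩ := exists_kLam_eq_psum lam (hj.trans hn.ge)
    have hle : V j ≤ V (kLam ℓ lam j) :=
      (isFlag_iff_isCompleteChain.1 hV).2.1 (le_kLam lam (hj.trans hn.ge))
    rw [hkt] at hle ⊢
    exact (Submodule.map_mono hle).trans (hinv t ht)

theorem isInvLamFlag_comp_psum (hsum : ∑ i, lam i = n) (hV : V ∈ Hess F n (kLam ℓ lam) T) :
    IsInvLamFlag F n ℓ lam T fun t => V (psum ℓ lam t) := by
  obtain ⟨hflag, hinv⟩ := (mem_hess_kLam_iff hsum).1 hV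
  have hV := isFlag_iff_isCompleteChain.1 hflag
  have hn : psum ℓ lam ℓ = n := (psum_self lam).trans hsum
  refine ⟨by simpa [psum_zero] using hV.1, by simpa [hn] using hV.eq_right,
    fun s t hst => hV.2.1 (psum_mono lam hst), fun t => ?_, fun t => hinv t (Nat.lt_succ_iff.1 t.2)⟩
  rw [hV.2.2.1 _ (hn ▸ psum_mono lam (Nat.lt_succ_iff.1 t.2)), finrank_bot, zero_add]

theorem mem_hess_and_comp_psum_eq_iff (hsum : ∑ i, lam i = n)
    {W : Fin (ℓ + 1) → Submodule F (Fin n → F)} (hW : IsInvLamFlag F n ℓ lam T W) :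
    (V ∈ Hess F n (kLam ℓ lam) T ∧ (fun t : Fin (ℓ + 1) => V (psum ℓ lam t)) = W) ↔
      IsCompleteChain ⊥ ⊤ n V ∧ ∀ t ≤ ℓ, V (psum ℓ lam t) = W (Fin.clamp t ℓ) := by
  constructor
  · rintro ⟨hV, rfl⟩
    exact ⟨isFlag_iff_isCompleteChain.1 ((mem_hess_kLam_iff hsum).1 hV).1,
      fun t ht => by simp [Fin.clamp, min_eq_left ht]⟩
  · rintro ⟨hV, hthrough⟩
    have hcomp : (fun t : Fin (ℓ + 1) => V (psum ℓ lam t)) = W := funext fun t => by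
      rw [hthrough t (Nat.lt_succ_iff.1 t.2)]
      congr
      ext
      simp [Fin.clamp, Nat.lt_succ_iff.1 t.2]
    refine ⟨(mem_hess_kLam_iff hsum).2 ⟨isFlag_iff_isCompleteChain.2 hV, fun t ht => ?_⟩, hcomp⟩
    rw [hthrough t ht]
    exact hW.2.2.2.2 _

theorem card_hess_comp_psum_eq [Finite F] (hsum : ∑ i, lam i = n)
    {W : Fin (ℓ + 1) → Submodule F (Fin n → F)} (hW : IsInvLamFlag F n ℓ lam T W) :
    Nat.card {V // V ∈ Hess F n (kLam ℓ lam) T ∧ (fun t : Fin (ℓ + 1) => V (psum ℓ lam t)) = W} =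
      ∏ i, qFact (Nat.card F) (lam i) := by
  have hrank (t : ℕ) : finrank F (W (Fin.clamp t ℓ)) = psum ℓ lam t := by
    rw [hW.2.2.2.1, Fin.clamp, psum_min]
  have key := card_isCompleteChain_through (K := F) (a := psum ℓ lam)
    (W := fun t => W (Fin.clamp t ℓ)) (psum_zero lam) (psum_mono lam)
    (fun s t hst => hW.2.2.1 (min_le_min_right ℓ hst))
    (fun t => by rw [hrank, hrank, psum_zero, zero_add]) ℓ
  have hclamp0 : Fin.clamp 0 ℓ = 0 := Fin.ext (Nat.zero_min ℓ)
  have hclampℓ : Fin.clamp ℓ ℓ = Fin.last ℓ := Fin.ext (min_self ℓ)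
  beta_reduce at key
  rw [hclamp0, hclampℓ, hW.1, hW.2.1, psum_self, hsum, prod_range_psum_sub] at key
  rw [← key]
  exact Nat.card_congr (Equiv.subtypeEquivRight fun V => mem_hess_and_comp_psum_eq_iff hsum hW)

end Hessenberg

theorem stmt10_general (F : Type) [Field F] [Fintype F] (n : ℕ)
    (ℓ : ℕ) (lam : Fin ℓ → ℕ)
    (hsum : ∑ i, lam i = n)
    (T : Module.End F (Fin n → F)) :
    (Hess F n (kLam ℓ lam) T).ncard =
      (∏ i, qFact (Fintype.card F) (lam i)) *
        {W : Fin (ℓ + 1) → Submodule F (Fin n → F) | IsInvLamFlag F n ℓ lam T W}.ncard := by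
  let restrict (V : Hess F n (kLam ℓ lam) T) : {W | IsInvLamFlag F n ℓ lam T W} :=
    ⟨fun t => V.1 (psum ℓ lam t), isInvLamFlag_comp_psum hsum V.2⟩
  have hfiber (W : {W | IsInvLamFlag F n ℓ lam T W}) :
      Nat.card {V // restrict V = W} = ∏ i, qFact (Fintype.card F) (lam i) := by
    rw [← Nat.card_eq_fintype_card, ← card_hess_comp_psum_eq hsum W.2]
    exact Nat.card_congr ((Equiv.subtypeEquivRight fun V => Subtype.ext_iff).trans
      (Equiv.subtypeSubtypeEquivSubtypeInter (· ∈ Hess F n (kLam ℓ lam) T)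
        fun V => (fun t : Fin (ℓ + 1) => V (psum ℓ lam t)) = W.1))
  rw [← Nat.card_coe_set_eq, ← Nat.card_coe_set_eq, mul_comm,
    Nat.card_eq_card_mul_of_card_fiber restrict (prod_ne_zero_iff.2 fun i _ => qFact_ne_zero _ _)
      hfiber]

/-- `|H(k_λ, T)| = [λ]_q! ⬝ fl_λ(T)`, where `fl_λ(T)` is the number of `λ`-flags of
`T`-invariant subspaces. -/
theorem stmt10 (F : Type) [Field F] [Fintype F] (n : ℕ)
    (ℓ : ℕ) (lam : Fin ℓ → ℕ) (hpos : ∀ i, 0 < lam i) (hanti : Antitone lam)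
    (hsum : ∑ i, lam i = n)
    (T : Module.End F (Fin n → F)) :
    (Hess F n (kLam ℓ lam) T).ncard =
      (∏ i, qFact (Fintype.card F) (lam i)) *
        {W : Fin (ℓ + 1) → Submodule F (Fin n → F) | IsInvLamFlag F n ℓ lam T W}.ncard :=
  stmt10_general F n ℓ lam hsum T
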